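/- arXiv:1105.2291 — 3 statements merged into one kernel-verified Lean document; each statement's English description precedes it below -/
import Mathlib

section
/- If Tr(x^d + a x) = 0 for all x ∈ GF(2^m), where d is coprime to 2^m - 1, then d is congruent to some power of 2 modulo 2^m - 1. -/
/-!
For an extension `L/K` of finite fields of degree `m`, write `q = #K`, `n = #L - 1`, and recall
`Tr(y) = ∑_{i < m} y ^ q ^ i`. The hypothesis `Tr(x ^ d + a x) = 0` says that the function
`x ↦ ∑_{i < m} x ^ (d q^i) + ∑_{i < m} a ^ q ^ i x ^ q ^ i` vanishes on `L`. Reducing the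
exponents `d q^i` modulo `n` (they stay nonzero since `d` is prime to `n`) turns this into a
polynomial of degree `< #L`, hence the zero polynomial. The residues of `d q^i` are pairwise
distinct, so the monomial `x ^ (d mod n)` occurs once in the first sum and must be cancelled by a
term `x ^ q ^ k` of the second: `d ≡ q ^ k`.
-/

open Finset

/-- `(-1)^{Tr(y)}` as an integer, where `Tr` is the absolute trace to `GF(2)`. -/
noncomputable def sgn (F : Type*) [Field F] [Fintype F] [Algebra (ZMod 2) F] (y : F) : ℤ :=
  if Algebra.trace (ZMod 2) F y = 0 then 1 else -1

/-- The Walsh transform `W_d(a) = Σ_{x ∈ GF(2^m)} (-1)^{Tr(x^d + a x)}`. -/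
noncomputable def Wd (F : Type*) [Field F] [Fintype F] [Algebra (ZMod 2) F]
    (d : ℕ) (a : F) : ℤ :=
  ∑ x : F, sgn F (x ^ d + a * x)

open Polynomial

theorem Nat.coprime_self_pow_sub_one {q m : ℕ} (hq : 0 < q) (hm : m ≠ 0) :
    Nat.Coprime q (q ^ m - 1) :=
  Nat.Coprime.coprime_dvd_left (dvd_pow_self q hm)
    ((Nat.coprime_self_sub_right (Nat.one_le_pow _ _ hq)).mpr (Nat.coprime_one_right _))

theorem Nat.mul_pow_mod_ne_zero {d q n : ℕ} (hd : d.Coprime n) (hq : q.Coprime n) (hn : n ≠ 1)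
    (i : ℕ) : d * q ^ i % n ≠ 0 := fun h ↦
  hn (Nat.Coprime.eq_one_of_dvd (hd.mul_left (hq.pow_left i)).symm (Nat.dvd_of_mod_eq_zero h))

theorem Nat.eq_zero_of_pow_modEq_one {q i m : ℕ} (hq : 1 < q) (hi : i < m)
    (h : q ^ i ≡ 1 [MOD q ^ m - 1]) : i = 0 := by
  have hpos : 1 ≤ q ^ i := Nat.one_le_pow _ _ (by omega)
  have hdvd : q ^ m - 1 ∣ q ^ i - 1 := (Nat.modEq_iff_dvd' hpos).mp h.symm
  have hsub : q ^ i - 1 = 0 :=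
    Nat.eq_zero_of_dvd_of_lt hdvd (Nat.sub_lt_sub_right hpos (Nat.pow_lt_pow_right hq hi))
  by_contra hi0
  have := Nat.one_lt_pow hi0 hq
  omega

namespace FiniteField

theorem pow_mod_card_sub_one {K : Type*} [Field K] [Fintype K] (x : K) {e : ℕ}
    (he : e % (Fintype.card K - 1) ≠ 0) : x ^ (e % (Fintype.card K - 1)) = x ^ e := by
  rcases eq_or_ne x 0 with rfl | hx
  · rw [zero_pow he, zero_pow (by rintro rfl; simp at he)]
  · conv_rhs => rw [← Nat.mod_add_div e (Fintype.card K - 1)]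
    rw [pow_add, pow_mul, pow_card_sub_one_eq_one x hx, one_pow, mul_one]

theorem exists_eq_of_forall_sum_pow_add_sum_mul_pow_eq_zero {ι L : Type*} [Field L] [Fintype L]
    {s : Finset ι} {r e : ι → ℕ} {c : ι → L}
    (hr : ∀ i ∈ s, r i < Fintype.card L) (he : ∀ i ∈ s, e i < Fintype.card L)
    {i₀ : ι} (hi₀ : i₀ ∈ s) (hinj : ∀ i ∈ s, r i = r i₀ → i = i₀)
    (h : ∀ x : L, ∑ i ∈ s, x ^ r i + ∑ i ∈ s, c i * x ^ e i = 0) :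
    ∃ i ∈ s, e i = r i₀ := by
  classical
  set P : L[X] := ∑ i ∈ s, X ^ r i + ∑ i ∈ s, C (c i) * X ^ e i
  have hP : P = 0 := by
    refine eq_zero_of_natDegree_lt_card_of_eval_eq_zero P Function.injective_id
      (fun x ↦ by simpa [P, eval_finsetSum] using h x) ?_
    have hdeg : P.natDegree ≤ Fintype.card L - 1 := by
      refine (natDegree_add_le _ _).trans (max_le ?_ ?_)
      · refine natDegree_sum_le_of_forall_le _ _ fun i hi ↦ ?_
        rw [natDegree_X_pow]
        exact Nat.le_sub_one_of_lt (hr i hi)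
      · refine natDegree_sum_le_of_forall_le _ _ fun i hi ↦ ?_
        exact (natDegree_C_mul_X_pow_le _ _).trans (Nat.le_sub_one_of_lt (he i hi))
    simpa using hdeg.trans_lt (Nat.sub_one_lt Fintype.card_ne_zero)
  by_contra! hne
  have hcoeff := congrArg (coeff · (r i₀)) hP
  have hfilter : {i ∈ s | r i₀ = r i} = {i₀} := by
    ext i
    simp only [mem_filter, mem_singleton]
    exact ⟨fun ⟨hi, hri⟩ ↦ hinj i hi hri.symm, by rintro rfl; exact ⟨hi₀, rfl⟩⟩
  have hzero : ∑ i ∈ s, (if r i₀ = e i then c i else 0) = 0 :=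
    sum_eq_zero fun i hi ↦ if_neg (hne i hi).symm
  simp only [P, coeff_add, finsetSum_coeff, coeff_X_pow, coeff_C_mul, mul_ite, mul_one, mul_zero,
    sum_boole, coeff_zero, hfilter, hzero] at hcoeff
  simp at hcoeff

theorem algebraMap_trace_pow_add_mul (K : Type*) {L : Type*} [Field K] [Field L] [Finite L]
    [Algebra K L] (d : ℕ) (a x : L) :
    algebraMap K L (Algebra.trace K L (x ^ d + a * x)) =
      ∑ i ∈ range (Module.finrank K L), x ^ (d * Nat.card K ^ i) +
        ∑ i ∈ range (Module.finrank K L), a ^ Nat.card K ^ i * x ^ Nat.card K ^ i := by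
  simp only [map_add, algebraMap_trace_eq_sum_pow, pow_mul, mul_pow]

theorem exists_modEq_card_pow_of_trace_pow_add_mul_eq_zero (K L : Type*) [Field K] [Fintype K]
    [Field L] [Fintype L] [Algebra K L] {d : ℕ} (hd : d.Coprime (Fintype.card L - 1)) (a : L)
    (h : ∀ x : L, Algebra.trace K L (x ^ d + a * x) = 0) :
    ∃ k, d ≡ Fintype.card K ^ k [MOD Fintype.card L - 1] := by
  set q := Fintype.card K
  set m := Module.finrank K L
  set n := Fintype.card L - 1
  have hcard : Fintype.card L = q ^ m := Module.card_eq_pow_finrank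
  have hq : 1 < q := Fintype.one_lt_card
  have hm : m ≠ 0 := Module.finrank_pos.ne'
  have hn_def : n = q ^ m - 1 := by rw [← hcard]
  obtain hn | hn := le_or_gt n 1
  · have : n = 1 := by have := Fintype.one_lt_card (α := L); omega
    exact ⟨0, this ▸ Nat.modEq_one⟩
  set r : ℕ → ℕ := fun i ↦ d * q ^ i % n
  have hr_ne : ∀ i, r i ≠ 0 :=
    Nat.mul_pow_mod_ne_zero hd (hn_def ▸ Nat.coprime_self_pow_sub_one (by omega) hm) hn.ne'
  have hsum : ∀ x : L, ∑ i ∈ range m, x ^ r i + ∑ i ∈ range m, a ^ q ^ i * x ^ q ^ i = 0 := by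
    intro x
    calc ∑ i ∈ range m, x ^ r i + ∑ i ∈ range m, a ^ q ^ i * x ^ q ^ i
        = ∑ i ∈ range m, x ^ (d * q ^ i) + ∑ i ∈ range m, a ^ q ^ i * x ^ q ^ i := by
          rw [sum_congr rfl fun i _ ↦ pow_mod_card_sub_one x (hr_ne i)]
      _ = algebraMap K L (Algebra.trace K L (x ^ d + a * x)) := by
          rw [algebraMap_trace_pow_add_mul, Nat.card_eq_fintype_card]
      _ = 0 := by rw [h x, map_zero]
  have hinj : ∀ i ∈ range m, r i = r 0 → i = 0 := by
    intro i hi hri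
    refine Nat.eq_zero_of_pow_modEq_one hq (mem_range.mp hi) ?_
    have hmod : d * q ^ i ≡ d * q ^ 0 [MOD n] := hri
    simpa [hn_def] using Nat.ModEq.cancel_left_of_coprime hd.symm hmod
  obtain ⟨i, -, hi⟩ := exists_eq_of_forall_sum_pow_add_sum_mul_pow_eq_zero
    (fun i _ ↦ (Nat.mod_lt _ (by omega)).trans (Nat.sub_one_lt Fintype.card_ne_zero))
    (fun i hi ↦ hcard ▸ Nat.pow_lt_pow_right hq (mem_range.mp hi))
    (mem_range.mpr (Nat.pos_of_ne_zero hm)) hinj hsum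
  refine ⟨i, ?_⟩
  show d % n = q ^ i % n
  rw [hi, pow_zero, mul_one]
  exact (Nat.mod_mod _ _).symm

end FiniteField

theorem stmt_2_general {m : ℕ} (F : Type*) [Field F] [Fintype F]
    [Algebra (ZMod 2) F] (hF : Fintype.card F = 2 ^ m)
    (d : ℕ) (hd : Nat.Coprime d (2 ^ m - 1)) (a : F)
    (h : ∀ x : F, Algebra.trace (ZMod 2) F (x ^ d + a * x) = 0) :
    ∃ k, d ≡ 2 ^ k [MOD 2 ^ m - 1] := by
  simpa [hF] using
    FiniteField.exists_modEq_card_pow_of_trace_pow_add_mul_eq_zero (ZMod 2) F (hF ▸ hd) a h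

/-- if Tr(x^d + a x) = 0 for all x, then d is a power of 2
modulo 2^m - 1. -/
theorem stmt_2 {m : ℕ} (hm : 1 ≤ m) (F : Type*) [Field F] [Fintype F]
    [Algebra (ZMod 2) F] (hF : Fintype.card F = 2 ^ m)
    (d : ℕ) (hd : Nat.Coprime d (2 ^ m - 1)) (a : F)
    (h : ∀ x : F, Algebra.trace (ZMod 2) F (x ^ d + a * x) = 0) :
    ∃ k, d ≡ 2 ^ k [MOD 2 ^ m - 1] :=
  stmt_2_general F hF d hd a h
end

section
/- The third power moment of the Walsh transform satisfies P_3 = Σ_{a ∈ GF(2^m)^*} W_d(a)^3 = 2^{2m} · |V|, where V = { x ∈ GF(2^m) : 1 + x^d + (1 + x)^d = 0 }. -/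
open Finset

/-!
Expanding the cube and summing over `a` first, orthogonality of the character
`y ↦ (-1)^{Tr y}` collapses `Σ_a W_d(a)^3` to `q · Σ_{x,y} (-1)^{Tr(x^d + y^d + (x+y)^d)}`,
`q = 2^m`. Substituting `y = x t` turns the double sum into `Σ_t Σ_x (-1)^{Tr(x^d c_t)}` with
`c_t = 1 + t^d + (1+t)^d`, and since `x ↦ x^d` permutes `GF(2^m)` the inner sum is `q` or `0`
according as `c_t = 0` or not. The same permutation property gives `W_d(0) = 0`, so the
term `a = 0` can be added for free. For `d = 0` (possible only when `m = 1`) both sides vanish.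
-/

section Sgn

variable {F : Type*} [Field F] [Fintype F] [Algebra (ZMod 2) F]

theorem sgn_zero : sgn F 0 = 1 := by simp [sgn]

theorem sgn_add (u v : F) : sgn F (u + v) = sgn F u * sgn F v := by
  unfold sgn
  rw [map_add]
  generalize Algebra.trace (ZMod 2) F u = a
  generalize Algebra.trace (ZMod 2) F v = b
  revert a b; decide

theorem sum_sgn : ∑ x : F, sgn F x = 0 := by
  obtain ⟨c, hc⟩ := Algebra.trace_surjective (ZMod 2) F 1
  have hc : sgn F c = -1 := by simp [sgn, hc]
  have hshift : ∑ x : F, sgn F (x + c) = ∑ x : F, sgn F x :=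
    Fintype.sum_equiv (Equiv.addRight c) _ _ fun _ => rfl
  simp only [sgn_add, hc, mul_neg_one, sum_neg_distrib] at hshift
  omega

theorem sum_sgn_add_mul [DecidableEq F] (s t : F) :
    ∑ a : F, sgn F (s + a * t) = if t = 0 then (Fintype.card F : ℤ) * sgn F s else 0 := by
  split_ifs with ht
  · simp [ht, mul_comm]
  · rw [Fintype.sum_equiv (Equiv.mulRight₀ t ht) (fun a => sgn F (s + a * t))
      (fun u => sgn F (s + u)) fun _ => rfl]
    simp [sgn_add, ← mul_sum, sum_sgn]

end Sgn

theorem pow_bijective_of_coprime {F : Type*} [Field F] [Fintype F] {d : ℕ} (hd0 : d ≠ 0)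
    (hd : d.Coprime (Fintype.card F - 1)) : Function.Bijective fun x : F => x ^ d := by
  rw [← Finite.injective_iff_bijective]
  intro x y hxy
  rcases eq_or_ne y 0 with rfl | hy
  · simpa [zero_pow hd0, hd0] using hxy
  rcases eq_or_ne x 0 with rfl | hx
  · simpa [zero_pow hd0, hd0, eq_comm] using hxy
  have hcard : (Nat.card Fˣ).Coprime d := by
    classical
    rwa [Nat.card_eq_fintype_card, Fintype.card_units, Nat.coprime_comm]
  have hu : Units.mk0 x hx = Units.mk0 y hy :=
    (powCoprime hcard).injective (Units.ext (by simpa using hxy))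
  simpa using congrArg Units.val hu

section Walsh

variable {F : Type*} [Field F] [Fintype F] [Algebra (ZMod 2) F] {d : ℕ}

instance charP_two_of_zmodAlgebra : CharP F 2 := charP_of_injective_algebraMap' (ZMod 2) 2

theorem Wd_zero_exponent [DecidableEq F] {a : F} (ha : a ≠ 0) : Wd F 0 a = 0 := by
  simpa [Wd, mul_comm, ha] using sum_sgn_add_mul (1 : F) a

theorem Wd_zero (hd : Function.Bijective fun x : F => x ^ d) : Wd F d 0 = 0 := by
  simpa [Wd] using (Fintype.sum_bijective _ hd (fun x => sgn F (x ^ d)) (sgn F) fun _ => rfl).trans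
    sum_sgn

theorem Wd_pow_three (a : F) : Wd F d a ^ 3 =
    ∑ x : F, ∑ y : F, ∑ z : F, sgn F ((x ^ d + y ^ d + z ^ d) + a * (x + y + z)) := by
  rw [pow_three, Wd, sum_mul_sum, sum_mul_sum]
  simp only [mul_sum, ← sgn_add]
  refine sum_congr rfl fun x _ => sum_congr rfl fun y _ => sum_congr rfl fun z _ => ?_
  ring_nf

theorem sum_Wd_pow_three [DecidableEq F] : ∑ a, Wd F d a ^ 3 =
    Fintype.card F * ∑ x : F, ∑ y : F, sgn F (x ^ d + y ^ d + (x + y) ^ d) := by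
  simp only [Wd_pow_three]
  rw [sum_comm]
  refine (sum_congr rfl fun x _ => ?_).trans (mul_sum _ _ _).symm
  rw [sum_comm]
  refine (sum_congr rfl fun y _ => ?_).trans (mul_sum _ _ _).symm
  rw [sum_comm]
  simp only [sum_sgn_add_mul, CharTwo.add_eq_zero, sum_ite_eq, mem_univ, if_true]

theorem sum_sgn_pow_mul [DecidableEq F] (hd : Function.Bijective fun x : F => x ^ d) (c : F) :
    ∑ x : F, sgn F (x ^ d * c) = if c = 0 then (Fintype.card F : ℤ) else 0 := by
  rw [Fintype.sum_bijective _ hd (fun x => sgn F (x ^ d * c)) (fun u => sgn F (0 + u * c))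
    fun _ => by rw [zero_add], sum_sgn_add_mul, sgn_zero, mul_one]

/-- For `x ≠ 0` this is the substitution `y = x t`; for `x = 0` both sides equal `q`. -/
theorem sum_sgn_pow_add_pow_add_pow_eq_sum_sgn_pow_mul (hd0 : d ≠ 0) (x : F) :
    ∑ y : F, sgn F (x ^ d + y ^ d + (x + y) ^ d) =
      ∑ t : F, sgn F (x ^ d * (1 + t ^ d + (1 + t) ^ d)) := by
  rcases eq_or_ne x 0 with rfl | hx
  · simp [zero_pow hd0, CharTwo.add_self_eq_zero, sgn_zero]
  · refine (Fintype.sum_equiv (Equiv.mulLeft₀ x hx) _ _ fun t => ?_).symm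
    change _ = sgn F (x ^ d + (x * t) ^ d + (x + x * t) ^ d)
    rw [show x + x * t = x * (1 + t) by ring, mul_pow, mul_pow]
    ring_nf

theorem sum_sgn_pow_add_pow_add_pow [DecidableEq F] (hd0 : d ≠ 0)
    (hd : Function.Bijective fun x : F => x ^ d) :
    ∑ x : F, ∑ y : F, sgn F (x ^ d + y ^ d + (x + y) ^ d) =
      Fintype.card F * (univ.filter fun t : F => 1 + t ^ d + (1 + t) ^ d = 0).card := by
  simp only [sum_sgn_pow_add_pow_add_pow_eq_sum_sgn_pow_mul hd0]
  rw [sum_comm]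
  simp only [sum_sgn_pow_mul hd, ← sum_filter, sum_const, nsmul_eq_mul, mul_comm]

end Walsh

theorem stmt_6_general {m : ℕ} (F : Type*) [Field F] [Fintype F] [DecidableEq F]
    [Algebra (ZMod 2) F] (hF : Fintype.card F = 2 ^ m)
    (d : ℕ) (hd : Nat.Coprime d (2 ^ m - 1)) :
    ∑ a ∈ Finset.univ \ {(0 : F)}, Wd F d a ^ 3 =
      2 ^ (2 * m) *
        ((Finset.univ.filter fun x : F => 1 + x ^ d + (1 + x) ^ d = 0).card : ℤ) := by
  rcases eq_or_ne d 0 with rfl | hd0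
  · have hV : (univ.filter fun x : F => 1 + x ^ 0 + (1 + x) ^ 0 = 0) = ∅ :=
      filter_eq_empty_iff.mpr fun _ _ => by simp [CharTwo.add_self_eq_zero]
    rw [hV, card_empty, Nat.cast_zero, mul_zero]
    exact sum_eq_zero fun a ha => by
      rw [Wd_zero_exponent (by simpa using ha), zero_pow three_ne_zero]
  · have hbij := pow_bijective_of_coprime hd0 (hF ▸ hd)
    rw [sdiff_singleton_eq_erase, sum_erase _ (by rw [Wd_zero hbij, zero_pow three_ne_zero]),
      sum_Wd_pow_three, sum_sgn_pow_add_pow_add_pow hd0 hbij, hF]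
    push_cast
    ring

/-- the third power moment equals 2^(2m) * |V|, where V is the set of
roots of 1 + x^d + (1+x)^d in GF(2^m). -/
theorem stmt_6 {m : ℕ} (hm : 1 ≤ m) (F : Type*) [Field F] [Fintype F] [DecidableEq F]
    [Algebra (ZMod 2) F] (hF : Fintype.card F = 2 ^ m)
    (d : ℕ) (hd : Nat.Coprime d (2 ^ m - 1)) :
    ∑ a ∈ Finset.univ \ {(0 : F)}, Wd F d a ^ 3 =
      2 ^ (2 * m) *
        ((Finset.univ.filter fun x : F => 1 + x ^ d + (1 + x) ^ d = 0).card : ℤ) :=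
  stmt_6_general F hF d hd
end

section
/- Let A, B, C be distinct nonzero integers with |A|, |B|, |C| < 2^m such that 2^{2m}k = 2^{2m}(A+B+C) - 2^m(AB+BC+CA) + (2^m-1)ABC for some integer k. Then 2^{2m} divides ABC. -/
open Finset

/-- the 2-adic valuation argument. If A, B, C are distinct nonzero
integers of absolute value less than 2^m satisfying the displayed identity for some
integer k, then 2^(2m) divides ABC. -/
theorem stmt_10 {m : ℕ} (hm : 1 ≤ m) (A B C k : ℤ)
    (hAB : A ≠ B) (hAC : A ≠ C) (hBC : B ≠ C)
    (hA : A ≠ 0) (hB : B ≠ 0) (hC : C ≠ 0)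
    (hA' : |A| < 2 ^ m) (hB' : |B| < 2 ^ m) (hC' : |C| < 2 ^ m)
    (h : 2 ^ (2 * m) * k =
      2 ^ (2 * m) * (A + B + C) - 2 ^ m * (A * B + B * C + C * A) +
        (2 ^ m - 1) * (A * B * C)) :
    2 ^ (2 * m) ∣ A * B * C := by
  haveI : Fact (Nat.Prime 2) := ⟨Nat.prime_two⟩
  -- valuations
  set a := padicValInt 2 A with ha_def
  set b := padicValInt 2 B with hb_def
  set c := padicValInt 2 C with hc_def
  have key : ∀ X : ℤ, X ≠ 0 → |X| < 2 ^ m → padicValInt 2 X < m := by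
    intro X hX hX'
    by_contra hge
    push_neg at hge
    have hdvd : (2 : ℤ) ^ m ∣ X := by
      rw [show ((2:ℤ) ^ m) = ((2:ℕ):ℤ) ^ m by norm_num,
        padicValInt_dvd_iff]
      exact Or.inr hge
    have := Int.le_of_dvd (abs_pos.mpr hX) ((dvd_abs _ _).mpr hdvd)
    omega
  have hav : a < m := key A hA hA'
  have hbv : b < m := key B hB hB'
  have hcv : c < m := key C hC hC'
  have hda : ((2:ℤ)) ^ a ∣ A := by
    simpa using padicValInt_dvd (p := 2) A
  have hdb : ((2:ℤ)) ^ b ∣ B := by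
    simpa using padicValInt_dvd (p := 2) B
  have hdc : ((2:ℤ)) ^ c ∣ C := by
    simpa using padicValInt_dvd (p := 2) C
  set t := a + b + c with ht_def
  have hval : padicValInt 2 (A * B * C) = t := by
    rw [padicValInt.mul (mul_ne_zero hA hB) hC, padicValInt.mul hA hB]
  by_cases hle : 2 * m ≤ t
  · -- then 2^(2m) ∣ 2^t ∣ ABC
    have : (2:ℤ) ^ t ∣ A * B * C := by
      calc (2:ℤ) ^ t = 2 ^ a * 2 ^ b * 2 ^ c := by rw [ht_def]; ring
        _ ∣ A * B * C := mul_dvd_mul (mul_dvd_mul hda hdb) hdc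
    exact dvd_trans (pow_dvd_pow 2 hle) this
  · push_neg at hle
    exfalso
    -- 2^(t+1) divides 2^(2m) * anything
    have h1 : (2:ℤ) ^ (t + 1) ∣ 2 ^ (2 * m) * (k - (A + B + C)) :=
      Dvd.dvd.mul_right (pow_dvd_pow 2 (by omega)) _
    -- 2^(t+1) divides 2^m * (AB + BC + CA)
    have h2 : (2:ℤ) ^ (t + 1) ∣ 2 ^ m * (A * B + B * C + C * A) := by
      have hab : (2:ℤ) ^ (t + 1) ∣ 2 ^ m * (A * B) := by
        have : (2:ℤ) ^ (m + (a + b)) ∣ 2 ^ m * (A * B) := by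
          rw [pow_add]; exact mul_dvd_mul_left _ (by rw [pow_add]; exact mul_dvd_mul hda hdb)
        exact dvd_trans (pow_dvd_pow 2 (by omega)) this
      have hbc : (2:ℤ) ^ (t + 1) ∣ 2 ^ m * (B * C) := by
        have : (2:ℤ) ^ (m + (b + c)) ∣ 2 ^ m * (B * C) := by
          rw [pow_add]; exact mul_dvd_mul_left _ (by rw [pow_add]; exact mul_dvd_mul hdb hdc)
        exact dvd_trans (pow_dvd_pow 2 (by omega)) this
      have hca : (2:ℤ) ^ (t + 1) ∣ 2 ^ m * (C * A) := by
        have : (2:ℤ) ^ (m + (c + a)) ∣ 2 ^ m * (C * A) := by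
          rw [pow_add]; exact mul_dvd_mul_left _ (by rw [pow_add]; exact mul_dvd_mul hdc hda)
        exact dvd_trans (pow_dvd_pow 2 (by omega)) this
      have := dvd_add (dvd_add hab hbc) hca
      simpa [mul_add] using this
    -- hence 2^(t+1) ∣ (2^m - 1) * ABC
    have h3 : (2:ℤ) ^ (t + 1) ∣ (2 ^ m - 1) * (A * B * C) := by
      have heq : (2 ^ m - 1) * (A * B * C) =
          2 ^ (2 * m) * (k - (A + B + C)) + 2 ^ m * (A * B + B * C + C * A) := by
        linarith [h]
      rw [heq]; exact dvd_add h1 h2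
    -- 2^m - 1 is odd, so coprime to 2^(t+1)
    have hodd : ¬ (2:ℤ) ∣ (2 ^ m - 1) := by
      intro ⟨d, hd⟩
      have : (2:ℤ) ∣ 2 ^ m := dvd_pow_self 2 (by omega)
      omega
    have hcop : IsCoprime ((2:ℤ) ^ (t + 1)) (2 ^ m - 1) :=
      IsCoprime.pow_left ((Int.prime_two.coprime_iff_not_dvd).mpr hodd)
    have h4 : (2:ℤ) ^ (t + 1) ∣ A * B * C := hcop.dvd_of_dvd_mul_left h3
    -- but valuation of ABC is exactly t
    have h5 : t + 1 ≤ padicValInt 2 (A * B * C) := by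
      have := (padicValInt_dvd_iff (p := 2) (t + 1) (A * B * C)).mp (by exact_mod_cast h4)
      rcases this with h | h
      · exact absurd h (by exact mul_ne_zero (mul_ne_zero hA hB) hC)
      · exact h
    omega
end
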